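/- arXiv:2403.18980 — 2 statements merged into one kernel-verified Lean document; each statement's English description precedes it below -/
import Mathlib

section
/- In a 4-labeling of the inner corners of a planar map with labels in {1,2,3,4}, if the sum of label jumps between consecutive corners in counterclockwise order around any inner edge equals 4, then every individual label jump around a vertex is 0, 1, or 2. -/
/-- The label jump from label `x` to label `y` (labels in `ZMod 4`, where
`1,2,3,4` are represented with `4 ≡ 0`): the unique `δ ∈ {0,1,2,3}` with
`x + δ ≡ y (mod 4)`. -/
def labelJump (x y : ZMod 4) : ℕ := (y - x).val

/-- Around an inner edge there are four corners; in counterclockwise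
order they are the left-initial corner `a`, right-initial corner `b`,
right-terminal corner `c` and left-terminal corner `d`.  The jumps `a → b` and
`c → d` are the label jumps around the two endpoint vertices, while `b → c` and
`d → a` are jumps between consecutive corners around the two incident faces
(which are strictly positive in a 4-labeling satisfying (L2)).  If the sum of
the four label jumps counterclockwise around the edge equals 4, then every
label jump around a vertex is 0, 1 or 2. -/
theorem vertex_jumps_le_two (a b c d : ZMod 4)
    (hsum : labelJump a b + labelJump b c + labelJump c d + labelJump d a = 4)
    (hface₁ : 1 ≤ labelJump b c) (hface₂ : 1 ≤ labelJump d a) :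
    labelJump a b ≤ 2 ∧ labelJump c d ≤ 2 := by
  revert hsum hface₁ hface₂; revert a b c d; decide
end

section
/- Let G* be a rooted 3,4-map with a dual 4-GS labeling, and suppose a non-root arc a = (u,v) is special, meaning (right-init(a), right-term(a), left-term(a), left-init(a)) = (k, k, k+2, k+3) modulo 4 for some k ∈ {1,2,3,4}. Then the vertex u has degree 4 and the vertex v has degree 3. -/
/-- A rooted 3,4-map (vertices `V`, non-root arcs `A`) endowed with a dual 4-GS
labeling.  Around each vertex `v` the labels of its `deg v` corners in
clockwise order are encoded by a periodic function `cor v : ℕ → ZMod 4`.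
The labeling satisfies: (L1*) the clockwise label jumps around every vertex
sum to 4; (L2*) consecutive corners around a vertex have distinct labels;
(L3*) for every non-root arc whose initial vertex has degree 3, the jump from
the left-initial corner to the right-initial corner plus the jump from the
right-initial corner to the right-terminal corner is at least 2.  Each arc
records the labels of its four incident corners, consistently with the corner
sequences around its endpoints. -/
structure DualGSMap where
  V : Type
  A : Type
  init : A → V
  term : A → V
  deg : V → ℕ
  deg34 : ∀ v, deg v = 3 ∨ deg v = 4
  cor : V → ℕ → ZMod 4
  cor_periodic : ∀ v i, cor v (i + deg v) = cor v i
  leftInit : A → ZMod 4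
  rightInit : A → ZMod 4
  leftTerm : A → ZMod 4
  rightTerm : A → ZMod 4
  /-- the left-initial and right-initial corners of an arc are consecutive in
  clockwise order around the initial vertex -/
  init_consec : ∀ a, ∃ i, cor (init a) i = leftInit a ∧
      cor (init a) (i + 1) = rightInit a
  /-- the right-terminal and left-terminal corners of an arc are consecutive in
  clockwise order around the terminal vertex -/
  term_consec : ∀ a, ∃ i, cor (term a) i = rightTerm a ∧
      cor (term a) (i + 1) = leftTerm a
  L1 : ∀ v, ∑ i ∈ Finset.range (deg v), labelJump (cor v i) (cor v (i + 1)) = 4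
  L2 : ∀ v i, cor v (i + 1) ≠ cor v i
  L3 : ∀ a, deg (init a) = 3 →
      2 ≤ labelJump (leftInit a) (rightInit a) + labelJump (rightInit a) (rightTerm a)

lemma labelJump_self (x : ZMod 4) : labelJump x x = 0 := by
  simp [labelJump]

lemma labelJump_add (x d : ZMod 4) : labelJump x (x + d) = d.val := by
  simp [labelJump]

lemma one_le_labelJump {x y : ZMod 4} (h : y ≠ x) : 1 ≤ labelJump x y :=
  Nat.one_le_iff_ne_zero.mpr fun h0 => sub_ne_zero.mpr h ((ZMod.val_eq_zero _).mp h0)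

lemma Finset.add_card_sub_one_le_sum {ι : Type*} [DecidableEq ι] {s : Finset ι}
    {f : ι → ℕ} {j : ι} (hj : j ∈ s) (hf : ∀ x ∈ s, 1 ≤ f x) :
    f j + (s.card - 1) ≤ ∑ x ∈ s, f x := by
  rw [← Finset.add_sum_erase s f hj, ← Finset.card_erase_of_mem hj]
  have := (s.erase j).card_nsmul_le_sum f 1 fun x hx => hf x (Finset.mem_of_mem_erase hx)
  simpa using this

namespace DualGSMap

variable (M : DualGSMap)

def cornerJump (v : M.V) (i : ℕ) : ℕ := labelJump (M.cor v i) (M.cor v (i + 1))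

lemma cornerJump_periodic (v : M.V) : Function.Periodic (M.cornerJump v) (M.deg v) := by
  intro i
  simp only [cornerJump, Nat.add_right_comm i (M.deg v) 1, M.cor_periodic]

lemma cornerJump_add_deg_le_five (v : M.V) (i : ℕ) : M.cornerJump v i + M.deg v ≤ 5 := by
  have hdeg : 0 < M.deg v := by rcases M.deg34 v with h | h <;> omega
  have hbound := Finset.add_card_sub_one_le_sum (f := M.cornerJump v)
    (Finset.mem_range.mpr (Nat.mod_lt i hdeg)) fun j _ => one_le_labelJump (M.L2 v j)
  rw [(M.cornerJump_periodic v).map_mod_nat, Finset.card_range] at hbound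
  have hsum : ∑ j ∈ Finset.range (M.deg v), M.cornerJump v j = 4 := M.L1 v
  omega

lemma deg_init_eq_four_of_lt_two {a : M.A}
    (h : labelJump (M.leftInit a) (M.rightInit a) +
      labelJump (M.rightInit a) (M.rightTerm a) < 2) :
    M.deg (M.init a) = 4 :=
  (M.deg34 _).resolve_left fun h3 => absurd (M.L3 a h3) (not_le.mpr h)

lemma deg_term_eq_three_of_two_le {a : M.A}
    (h : 2 ≤ labelJump (M.rightTerm a) (M.leftTerm a)) : M.deg (M.term a) = 3 := by
  obtain ⟨i, hright, hleft⟩ := M.term_consec a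
  have hle := M.cornerJump_add_deg_le_five (M.term a) i
  rw [cornerJump, hright, hleft] at hle
  rcases M.deg34 (M.term a) with h3 | h4
  · exact h3
  · omega

end DualGSMap

/-- In a rooted 3,4-map with a dual 4-GS labeling, if a non-root
arc `a = (u,v)` is special, i.e.
`(right-init a, right-term a, left-term a, left-init a) = (k, k, k+2, k+3)`
modulo 4 for some label `k`, then `u` has degree 4 and `v` has degree 3. -/
theorem special_arc_degrees (M : DualGSMap) (a : M.A) (k : ZMod 4)
    (h1 : M.rightInit a = k) (h2 : M.rightTerm a = k)
    (h3 : M.leftTerm a = k + 2) (h4 : M.leftInit a = k + 3) :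
    M.deg (M.init a) = 4 ∧ M.deg (M.term a) = 3 := by
  constructor
  · apply M.deg_init_eq_four_of_lt_two
    have hwrap : k + 3 + 1 = k := by rw [add_assoc]; exact add_zero k
    have hjump := labelJump_add (k + 3) 1
    rw [hwrap] at hjump
    rw [h1, h2, h4, labelJump_self, hjump]
    decide
  · apply M.deg_term_eq_three_of_two_le
    rw [h2, h3, labelJump_add]
    decide
end
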